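/- arXiv:1303.2825 — 2 statements merged into one kernel-verified Lean document; each statement's English description precedes it below -/
import Mathlib

section
/- (Confluent Christoffel–Darboux formula) Let μ be a positive Borel measure on ℝ with infinite support and all moments finite, let (p_n)_{n≥0} be a system of orthogonal polynomials with respect to μ, let k_n denote the leading coefficient of p_n and h_n := ∫ p_n(x)^2 dμ(x). Then for all real x and all n ≥ 0: ∑_{j=0}^{n} p_j(x)^2 / h_j = (k_n / (h_n k_{n+1})) · (p_{n+1}'(x) p_n(x) − p_n'(x) p_{n+1}(x)). -/
open MeasureTheory Polynomial

/-- The support of a positive Borel measure on `ℝ`. -/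
def measureSupport (μ : Measure ℝ) : Set ℝ := {x : ℝ | ∀ U ∈ nhds x, 0 < μ U}

lemma integrable_eval (μ : Measure ℝ) (hmom : ∀ n : ℕ, Integrable (fun x : ℝ => |x| ^ n) μ)
    (q : Polynomial ℝ) : Integrable (fun x => q.eval x) μ := by
  have h : ∀ x : ℝ, q.eval x = ∑ i ∈ Finset.range (q.natDegree + 1), q.coeff i * x ^ i :=
    fun x => q.eval_eq_sum_range x
  simp_rw [h]
  apply integrable_finset_sum
  intro i _
  apply Integrable.const_mul
  refine (hmom i).mono' ?_ ?_
  · exact (continuous_pow i).aestronglyMeasurable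
  · filter_upwards with x
    simp [abs_pow]

lemma sq_integral_pos (μ : Measure ℝ) (hmom : ∀ n : ℕ, Integrable (fun x : ℝ => |x| ^ n) μ)
    (hsupp : (measureSupport μ).Infinite)
    (q : Polynomial ℝ) (hq : q ≠ 0) : 0 < ∫ t, q.eval t ^ 2 ∂μ := by
  have hint : Integrable (fun t => q.eval t ^ 2) μ := by
    have := integrable_eval μ hmom (q ^ 2)
    simpa using this
  have hnn : 0 ≤ ∫ t, q.eval t ^ 2 ∂μ := integral_nonneg fun t => sq_nonneg _
  rcases hnn.lt_or_eq with h | h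
  · exact h
  exfalso
  have hae : (fun t => q.eval t ^ 2) =ᵐ[μ] 0 :=
    (integral_eq_zero_iff_of_nonneg (fun t => sq_nonneg _) hint).mp h.symm
  have hmeas : μ {x | q.eval x ≠ 0} = 0 := by
    have : {x | q.eval x ≠ 0} ⊆ {x | ¬ ((fun t => q.eval t ^ 2) x = (0:ℝ → ℝ) x)} := by
      intro x hx
      simp only [Set.mem_setOf_eq, Pi.zero_apply, pow_eq_zero_iff] at *
      exact fun h2 => hx (by simpa using h2)
    exact measure_mono_null this (ae_iff.mp hae)
  have hsub : measureSupport μ ⊆ {x | q.IsRoot x} := by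
    intro x hx
    by_contra hr
    have hopen : IsOpen {y : ℝ | q.eval y ≠ 0} :=
      isOpen_ne.preimage q.continuous_aeval |>.mono le_rfl
    have : 0 < μ {y : ℝ | q.eval y ≠ 0} :=
      hx _ (hopen.mem_nhds (by simpa [IsRoot] using hr))
    exact this.ne' hmeas
  exact hsupp (Set.Finite.subset (q.finite_setOf_isRoot hq) hsub)
lemma integrable_eval_mul (μ : Measure ℝ) (hmom : ∀ n : ℕ, Integrable (fun x : ℝ => |x| ^ n) μ)
    (q r : Polynomial ℝ) : Integrable (fun x => q.eval x * r.eval x) μ := by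
  have := integrable_eval μ hmom (q * r)
  simpa [eval_mul] using this

lemma inner_sub (μ : Measure ℝ) (hmom : ∀ n : ℕ, Integrable (fun x : ℝ => |x| ^ n) μ)
    (q s t : Polynomial ℝ) :
    ∫ x, (q - s).eval x * t.eval x ∂μ =
      (∫ x, q.eval x * t.eval x ∂μ) - ∫ x, s.eval x * t.eval x ∂μ := by
  rw [← integral_sub (integrable_eval_mul μ hmom q t) (integrable_eval_mul μ hmom s t)]
  congr 1; ext x; simp [sub_mul]

lemma inner_smul (μ : Measure ℝ) (c : ℝ) (q t : Polynomial ℝ) :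
    ∫ x, (c • q).eval x * t.eval x ∂μ = c * ∫ x, q.eval x * t.eval x ∂μ := by
  rw [← MeasureTheory.integral_const_mul c]
  congr 1; ext x; simp [mul_assoc]

lemma degree_lt_of_coeff (s : Polynomial ℝ) (d : ℕ) (h1 : s.natDegree ≤ d)
    (h2 : s.coeff d = 0) : s.degree < d := by
  rw [Polynomial.degree_lt_iff_coeff_zero]
  intro m hm
  rcases eq_or_lt_of_le hm with rfl | h
  · exact_mod_cast h2
  · exact s.coeff_eq_zero_of_natDegree_lt (by exact_mod_cast lt_of_le_of_lt h1 (by exact_mod_cast h))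

lemma p_natDegree (p : ℕ → Polynomial ℝ) (hdeg : ∀ n : ℕ, (p n).degree = n) (n : ℕ) :
    (p n).natDegree = n :=
  natDegree_eq_of_degree_eq_some (hdeg n)

lemma p_ne_zero (p : ℕ → Polynomial ℝ) (hdeg : ∀ n : ℕ, (p n).degree = n) (n : ℕ) :
    p n ≠ 0 := fun h => by have h2 := hdeg n; rw [h, degree_zero] at h2; exact absurd h2 (by simp)

lemma K_ne_zero (p : ℕ → Polynomial ℝ) (hdeg : ∀ n : ℕ, (p n).degree = n) (n : ℕ) :
    (p n).coeff n ≠ 0 := by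
  have h := p_natDegree p hdeg n
  rw [show (p n).coeff n = (p n).leadingCoeff by rw [leadingCoeff, h]]
  exact leadingCoeff_ne_zero.mpr (p_ne_zero p hdeg n)

lemma orth_lt (μ : Measure ℝ) (hmom : ∀ n : ℕ, Integrable (fun x : ℝ => |x| ^ n) μ)
    (p : ℕ → Polynomial ℝ) (hdeg : ∀ n : ℕ, (p n).degree = n)
    (horth : ∀ m n : ℕ, m ≠ n → ∫ x, (p m).eval x * (p n).eval x ∂μ = 0) :
    ∀ (n : ℕ) (q : Polynomial ℝ), q.degree < (n : WithBot ℕ) →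
    ∫ x, q.eval x * (p n).eval x ∂μ = 0 := by
  have key : ∀ (m n : ℕ) (q : Polynomial ℝ), q.natDegree ≤ m → q.degree < (n : WithBot ℕ) →
      ∫ x, q.eval x * (p n).eval x ∂μ = 0 := by
    intro m
    induction m with
    | zero =>
      intro n q h1 h2
      by_cases hq : q = 0
      · simp [hq]
      have hd : q.natDegree = 0 := Nat.le_zero.mp h1
      have hn : n ≠ 0 := by
        rintro rfl
        rw [degree_eq_natDegree hq, hd] at h2
        simp at h2
      have hp0 : p 0 = C ((p 0).coeff 0) := eq_C_of_natDegree_eq_zero (p_natDegree p hdeg 0)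
      have hqc : q = C (q.coeff 0) := eq_C_of_natDegree_eq_zero hd
      have horth0 := horth 0 n (Ne.symm hn)
      have hK0 := K_ne_zero p hdeg 0
      calc ∫ x, q.eval x * (p n).eval x ∂μ
          = ∫ x, (q.coeff 0 / (p 0).coeff 0) * ((p 0).eval x * (p n).eval x) ∂μ := by
            congr 1; ext x
            conv_lhs => rw [hqc]
            conv_rhs => rw [hp0]
            simp only [eval_C, eval_mul, coeff_C_zero]
            field_simp
        _ = (q.coeff 0 / (p 0).coeff 0) * ∫ x, (p 0).eval x * (p n).eval x ∂μ :=
            MeasureTheory.integral_const_mul _ _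
        _ = 0 := by rw [horth0, mul_zero]
    | succ m ih =>
      intro n q h1 h2
      by_cases hq : q = 0
      · simp [hq]
      by_cases hd : q.natDegree ≤ m
      · exact ih n q hd h2
      set d := q.natDegree with hdd
      set c := q.coeff d / (p d).coeff d with hc
      set r := q - c • p d with hr
      have hKd := K_ne_zero p hdeg d
      have hrd : r.degree < (d : WithBot ℕ) := by
        apply degree_lt_of_coeff
        · apply le_trans (natDegree_sub_le _ _)
          simp only [max_le_iff]
          exact ⟨le_rfl, le_trans (natDegree_smul_le _ _) (le_of_eq (p_natDegree p hdeg d))⟩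
        · simp only [hr, coeff_sub, coeff_smul, smul_eq_mul, hc]
          field_simp
          ring
      have hdn : (d : WithBot ℕ) < n := by
        rw [degree_eq_natDegree hq] at h2; exact h2
      have hrm : r.natDegree ≤ m := by
        by_cases hr0 : r = 0
        · simp [hr0]
        have h3 := (degree_eq_natDegree hr0) ▸ hrd
        have h4 : r.natDegree < d := by exact_mod_cast h3
        omega
      have hrint := ih n r hrm (lt_trans hrd hdn)
      have hsub := inner_sub μ hmom q (c • p d) (p n)
      rw [inner_smul] at hsub
      have hdn' : d ≠ n := by
        intro h; rw [h] at hdn; exact lt_irrefl _ hdn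
      rw [horth d n hdn', mul_zero, sub_zero] at hsub
      rw [← hsub]; exact hrint
  intro n q h
  exact key q.natDegree n q le_rfl h

lemma inner_self (μ : Measure ℝ) (q : Polynomial ℝ) :
    ∫ x, q.eval x * q.eval x ∂μ = ∫ t, q.eval t ^ 2 ∂μ := by
  congr 1; ext x; ring

lemma inner_add (μ : Measure ℝ) (hmom : ∀ n : ℕ, Integrable (fun x : ℝ => |x| ^ n) μ)
    (q s t : Polynomial ℝ) :
    ∫ x, (q + s).eval x * t.eval x ∂μ =
      (∫ x, q.eval x * t.eval x ∂μ) + ∫ x, s.eval x * t.eval x ∂μ := by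
  rw [← integral_add (integrable_eval_mul μ hmom q t) (integrable_eval_mul μ hmom s t)]
  congr 1; ext x; simp [add_mul]

lemma eq_zero_of_orth (μ : Measure ℝ) (hmom : ∀ n : ℕ, Integrable (fun x : ℝ => |x| ^ n) μ)
    (hsupp : (measureSupport μ).Infinite)
    (p : ℕ → Polynomial ℝ) (hdeg : ∀ n : ℕ, (p n).degree = n)
    (horth : ∀ m n : ℕ, m ≠ n → ∫ x, (p m).eval x * (p n).eval x ∂μ = 0)
    (r : Polynomial ℝ) (h : ∀ j : ℕ, j ≤ r.natDegree → ∫ x, r.eval x * (p j).eval x ∂μ = 0) :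
    r = 0 := by
  by_contra hr0
  set d := r.natDegree with hd
  set c := r.coeff d / (p d).coeff d with hc
  have hKd := K_ne_zero p hdeg d
  have hc0 : c ≠ 0 := div_ne_zero (by rw [hd]; exact mt leadingCoeff_eq_zero.mp hr0) hKd
  set s := r - c • p d with hs
  have hsd : s.degree < (d : WithBot ℕ) := by
    apply degree_lt_of_coeff
    · exact le_trans (natDegree_sub_le _ _) (max_le le_rfl
        (le_trans (natDegree_smul_le _ _) (le_of_eq (p_natDegree p hdeg d))))
    · simp only [hs, coeff_sub, coeff_smul, smul_eq_mul, hc]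
      field_simp
      ring
  have e1 := inner_sub μ hmom r (c • p d) (p d)
  rw [inner_smul, ← hs, orth_lt μ hmom p hdeg horth d s hsd] at e1
  rw [inner_self] at e1
  have e2 : c * ∫ t, (p d).eval t ^ 2 ∂μ = 0 := by
    rw [← h d le_rfl]; linarith
  exact absurd e2 (mul_ne_zero hc0
    (sq_integral_pos μ hmom hsupp (p d) (p_ne_zero p hdeg d)).ne')

lemma recurrence (μ : Measure ℝ) (hmom : ∀ n : ℕ, Integrable (fun x : ℝ => |x| ^ n) μ)
    (hsupp : (measureSupport μ).Infinite)
    (p : ℕ → Polynomial ℝ) (hdeg : ∀ n : ℕ, (p n).degree = n)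
    (horth : ∀ m n : ℕ, m ≠ n → ∫ x, (p m).eval x * (p n).eval x ∂μ = 0) (n : ℕ) :
    ∃ a : ℝ, p (n + 2) =
      ((p (n + 2)).coeff (n + 2) / (p (n + 1)).coeff (n + 1)) • (X * p (n + 1)) +
      a • p (n + 1) +
      (-((p (n + 2)).coeff (n + 2) * (p n).coeff n * (∫ t, (p (n + 1)).eval t ^ 2 ∂μ)) /
        ((p (n + 1)).coeff (n + 1) ^ 2 * (∫ t, (p n).eval t ^ 2 ∂μ))) • p n := by
  have hK2 := K_ne_zero p hdeg (n + 2)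
  have hK1 := K_ne_zero p hdeg (n + 1)
  have hK0 := K_ne_zero p hdeg n
  have hH1 := sq_integral_pos μ hmom hsupp (p (n + 1)) (p_ne_zero p hdeg (n + 1))
  have hH0 := sq_integral_pos μ hmom hsupp (p n) (p_ne_zero p hdeg n)
  set K2 := (p (n + 2)).coeff (n + 2) with hK2d
  set K1 := (p (n + 1)).coeff (n + 1) with hK1d
  set K0 := (p n).coeff n with hK0d
  set H1 := ∫ t, (p (n + 1)).eval t ^ 2 ∂μ with hH1d
  set H0 := ∫ t, (p n).eval t ^ 2 ∂μ with hH0d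
  set Cc := K2 / K1 with hCc
  set q := p (n + 2) - Cc • (X * p (n + 1)) with hq
  have hXp1 : (X * p (n + 1)).natDegree ≤ n + 2 := by
    refine le_trans (natDegree_mul_le) ?_
    simp only [natDegree_X, p_natDegree p hdeg (n + 1)]
    omega
  have hXp1c : (X * p (n + 1)).coeff (n + 2) = K1 := by
    rw [coeff_X_mul]
  have hqdeg : q.degree < ((n + 2 : ℕ) : WithBot ℕ) := by
    apply degree_lt_of_coeff
    · exact le_trans (natDegree_sub_le _ _) (max_le (le_of_eq (p_natDegree p hdeg (n + 2)))
        (le_trans (natDegree_smul_le _ _) hXp1))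
    · simp only [hq, coeff_sub, coeff_smul, smul_eq_mul, hXp1c, hCc]
      field_simp
      simp [hK2d]
  have hqnd : q.natDegree ≤ n + 1 := by
    by_cases h0 : q = 0
    · simp [h0]
    have := (degree_eq_natDegree h0) ▸ hqdeg
    have : q.natDegree < n + 2 := by exact_mod_cast this
    omega
  -- orthogonality of q to p j for j < n
  have key : ∀ j : ℕ, j < n → ∫ x, q.eval x * (p j).eval x ∂μ = 0 := by
    intro j hj
    have e1 : ∫ x, q.eval x * (p j).eval x ∂μ =
        (∫ x, (p (n + 2)).eval x * (p j).eval x ∂μ) -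
          Cc * ∫ x, (X * p (n + 1)).eval x * (p j).eval x ∂μ := by
      rw [hq, inner_sub μ hmom, inner_smul]
    have e2 : ∫ x, (X * p (n + 1)).eval x * (p j).eval x ∂μ =
        ∫ x, (X * p j).eval x * (p (n + 1)).eval x ∂μ := by
      congr 1; ext x; simp only [eval_mul, eval_X]; ring
    have e3 : (X * p j).degree < ((n + 1 : ℕ) : WithBot ℕ) := by
      rw [degree_mul, degree_X, hdeg j]
      exact_mod_cast by omega
    rw [e1, e2, orth_lt μ hmom p hdeg horth (n + 1) _ e3,
      horth (n + 2) j (by omega), mul_zero, sub_zero]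
  set a := (∫ x, q.eval x * (p (n + 1)).eval x ∂μ) / H1 with ha
  set b := (∫ x, q.eval x * (p n).eval x ∂μ) / H0 with hb
  set r := q - a • p (n + 1) - b • p n with hrdef
  have hrj : ∀ j : ℕ, ∫ x, r.eval x * (p j).eval x ∂μ =
      (∫ x, q.eval x * (p j).eval x ∂μ) -
        a * (∫ x, (p (n + 1)).eval x * (p j).eval x ∂μ) -
        b * ∫ x, (p n).eval x * (p j).eval x ∂μ := by
    intro j
    rw [hrdef, inner_sub μ hmom, inner_sub μ hmom, inner_smul, inner_smul]
  have hrnd : r.natDegree ≤ n + 1 := by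
    refine le_trans (natDegree_sub_le _ _) (max_le (le_trans (natDegree_sub_le _ _)
      (max_le hqnd (le_trans (natDegree_smul_le _ _)
        (le_of_eq (p_natDegree p hdeg (n + 1)))))) ?_)
    exact le_trans (natDegree_smul_le _ _) (by rw [p_natDegree p hdeg n]; omega)
  have hr0 : r = 0 := by
    apply eq_zero_of_orth μ hmom hsupp p hdeg horth
    intro j hj
    have hjn : j ≤ n + 1 := le_trans hj hrnd
    rw [hrj j]
    rcases Nat.lt_or_ge j n with hlt | hge
    · rw [key j hlt, horth (n + 1) j (by omega), horth n j (by omega)]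
      ring
    · rcases Nat.eq_or_lt_of_le hge with rfl | hgt
      · -- j = n
        rw [inner_self, horth (n + 1) n (by omega), hb]
        field_simp
        rw [← hH0d]; ring
      · have hj1 : j = n + 1 := by omega
        subst hj1
        rw [inner_self, horth n (n + 1) (by omega), ha]
        field_simp
        rw [← hH1d]; ring
  have hrec : p (n + 2) = Cc • (X * p (n + 1)) + a • p (n + 1) + b • p n := by
    have h1 : q - a • p (n + 1) - b • p n = 0 := hr0
    have h2 : q = a • p (n + 1) + b • p n := by
      rw [sub_sub, sub_eq_zero] at h1; exact h1
    rw [hq] at h2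
    rw [sub_eq_iff_eq_add] at h2
    rw [h2]; ring
  -- compute b
  set s := X * p n - (K0 / K1) • p (n + 1) with hs
  have hsdeg : s.degree < ((n + 1 : ℕ) : WithBot ℕ) := by
    apply degree_lt_of_coeff
    · refine le_trans (natDegree_sub_le _ _) (max_le ?_ (le_trans (natDegree_smul_le _ _)
        (le_of_eq (p_natDegree p hdeg (n + 1)))))
      refine le_trans (natDegree_mul_le) ?_
      simp only [natDegree_X, p_natDegree p hdeg n]
      omega
    · simp only [hs, coeff_sub, coeff_smul, smul_eq_mul, coeff_X_mul]
      field_simp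
      rw [hK0d, hK1d]; ring
  have hXpn : ∫ x, (X * p (n + 1)).eval x * (p n).eval x ∂μ = K0 / K1 * H1 := by
    have e2 : ∫ x, (X * p (n + 1)).eval x * (p n).eval x ∂μ =
        ∫ x, (X * p n).eval x * (p (n + 1)).eval x ∂μ := by
      congr 1; ext x; simp only [eval_mul, eval_X]; ring
    have e4 : X * p n = (K0 / K1) • p (n + 1) + s := by rw [hs]; ring
    rw [e2, e4, inner_add μ hmom, inner_smul, inner_self,
      orth_lt μ hmom p hdeg horth (n + 1) s hsdeg, add_zero]
  have hbval : b = -(K2 * K0 * H1) / (K1 ^ 2 * H0) := by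
    rw [hb, hq, inner_sub μ hmom, inner_smul, horth (n + 2) n (by omega), hXpn, hCc]
    field_simp
    ring
  exact ⟨a, by rw [hrec, hbval]⟩

/-- **Confluent Christoffel–Darboux formula.** For orthogonal polynomials `pₙ` with
leading coefficients `kₙ` and quadratic norms `hₙ = ∫ pₙ² dμ`, for every real `x`:
`∑_{j=0}^{n} pⱼ(x)²/hⱼ = (kₙ/(hₙ k_{n+1})) (p_{n+1}'(x)pₙ(x) − pₙ'(x)p_{n+1}(x))`. -/
theorem confluent_christoffel_darboux
    (μ : Measure ℝ)
    (hsupp : (measureSupport μ).Infinite)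
    (hmom : ∀ n : ℕ, Integrable (fun x : ℝ => |x| ^ n) μ)
    (p : ℕ → Polynomial ℝ)
    (hdeg : ∀ n : ℕ, (p n).degree = n)
    (horth : ∀ m n : ℕ, m ≠ n → ∫ x, (p m).eval x * (p n).eval x ∂μ = 0) :
    ∀ (n : ℕ) (x : ℝ),
      ∑ j ∈ Finset.range (n + 1),
          (p j).eval x ^ 2 / (∫ t, (p j).eval t ^ 2 ∂μ) =
        (p n).coeff n / ((∫ t, (p n).eval t ^ 2 ∂μ) * (p (n + 1)).coeff (n + 1)) *
          ((Polynomial.derivative (p (n + 1))).eval x * (p n).eval x -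
            (Polynomial.derivative (p n)).eval x * (p (n + 1)).eval x) := by
  intro n x
  induction n with
  | zero =>
    have hK0 := K_ne_zero p hdeg 0
    have hK1 := K_ne_zero p hdeg 1
    have hH0 := sq_integral_pos μ hmom hsupp (p 0) (p_ne_zero p hdeg 0)
    have hp0 : p 0 = C ((p 0).coeff 0) := eq_C_of_natDegree_eq_zero (p_natDegree p hdeg 0)
    have hp1 : p 1 = C ((p 1).coeff 1) * X + C ((p 1).coeff 0) :=
      eq_X_add_C_of_degree_le_one (le_of_eq (hdeg 1))
    have hd0 : Polynomial.derivative (p 0) = 0 := by rw [hp0]; simp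
    have hd1 : (Polynomial.derivative (p 1)).eval x = (p 1).coeff 1 := by
      conv_lhs => rw [hp1]
      simp
    have he0 : (p 0).eval x = (p 0).coeff 0 := by conv_lhs => rw [hp0]; simp
    simp only [Finset.sum_range_one, hd0, eval_zero, hd1, he0, zero_mul, sub_zero]
    field_simp
    rw [zero_add, Finset.sum_range_one, he0]
    exact div_mul_cancel₀ _ hH0.ne'
  | succ n ih =>
    obtain ⟨a, hrec⟩ := recurrence μ hmom hsupp p hdeg horth n
    have hK2 := K_ne_zero p hdeg (n + 2)
    have hK1 := K_ne_zero p hdeg (n + 1)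
    have hK0 := K_ne_zero p hdeg n
    have hH1 := sq_integral_pos μ hmom hsupp (p (n + 1)) (p_ne_zero p hdeg (n + 1))
    have hH0 := sq_integral_pos μ hmom hsupp (p n) (p_ne_zero p hdeg n)
    set K2 := (p (n + 2)).coeff (n + 2)
    set K1 := (p (n + 1)).coeff (n + 1)
    set K0 := (p n).coeff n
    set H1 := ∫ t, (p (n + 1)).eval t ^ 2 ∂μ with hH1e
    set H0 := ∫ t, (p n).eval t ^ 2 ∂μ with hH0e
    set b := -(K2 * K0 * H1) / (K1 ^ 2 * H0) with hbd
    set P1 := (p (n + 1)).eval x with hP1e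
    set P0 := (p n).eval x with hP0e
    set D1 := (Polynomial.derivative (p (n + 1))).eval x
    set D0 := (Polynomial.derivative (p n)).eval x
    have hval : (p (n + 2)).eval x = K2 / K1 * (x * P1) + a * P1 + b * P0 := by
      conv_lhs => rw [hrec]
      simp
      rfl
    have hder : (Polynomial.derivative (p (n + 2))).eval x =
        K2 / K1 * (P1 + x * D1) + a * D1 + b * D0 := by
      conv_lhs => rw [hrec]
      simp only [derivative_add, derivative_smul, derivative_mul, derivative_X, one_mul,
        eval_add, eval_smul, eval_mul, eval_X, smul_eq_mul]
      rfl
    rw [Finset.sum_range_succ, ih, hval, hder, hbd]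
    field_simp
    rw [← hH1e, ← hP1e]
    field_simp
    ring
end

section
/- (Gauss quadrature) Let μ be a positive Borel measure on ℝ with infinite support and all moments finite, let (p_n)_{n≥0} be a system of orthogonal polynomials with respect to μ, and let x_1 < x_2 < … < x_n be the n distinct real zeros of p_n. For k = 1,…,n let l_k be the Lagrange interpolation polynomial of degree < n with l_k(x_j) = δ_{k,j}, and put λ_k := ∫ l_k(x) dμ(x). Then λ_k = ∫ l_k(x)^2 dμ(x) > 0 for each k, and ∫ f(x) dμ(x) = ∑_{k=1}^{n} λ_k f(x_k) for every polynomial f of degree ≤ 2n − 1. -/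
open MeasureTheory Polynomial

lemma GQ.integrable_poly (μ : Measure ℝ)
    (hmom : ∀ n : ℕ, Integrable (fun x : ℝ => |x| ^ n) μ)
    (q : Polynomial ℝ) : Integrable (fun t => q.eval t) μ := by
  have h : (fun t : ℝ => q.eval t)
      = fun t => ∑ i ∈ Finset.range (q.natDegree + 1), q.coeff i * t ^ i := by
    funext t; exact q.eval_eq_sum_range t
  rw [h]
  apply integrable_finset_sum
  intro i _
  have h1 : Integrable (fun t : ℝ => t ^ i) μ := by
    refine (hmom i).mono' (continuous_pow i).aestronglyMeasurable ?_
    filter_upwards with t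
    simp [abs_pow]
  exact h1.const_mul _

lemma GQ.integral_sq_pos (μ : Measure ℝ)
    (hsupp : ({x : ℝ | ∀ U ∈ nhds x, 0 < μ U}).Infinite)
    (hmom : ∀ n : ℕ, Integrable (fun x : ℝ => |x| ^ n) μ)
    (q : Polynomial ℝ) (hq : q ≠ 0) :
    0 < ∫ t, q.eval t ^ 2 ∂μ := by
  have hint : Integrable (fun t => q.eval t ^ 2) μ := by
    have := GQ.integrable_poly μ hmom (q ^ 2)
    simpa only [eval_pow] using this
  have hnn : (0 : ℝ → ℝ) ≤ fun t => q.eval t ^ 2 := fun t => sq_nonneg _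
  rw [integral_pos_iff_support_of_nonneg hnn hint]
  obtain ⟨x₀, hx₀, hx₀r⟩ := (hsupp.diff (Polynomial.finite_setOf_isRoot hq)).nonempty
  have hUopen : IsOpen {t : ℝ | q.eval t ≠ 0} :=
    isOpen_ne_fun (q.continuous) continuous_const
  have hU : {t : ℝ | q.eval t ≠ 0} ∈ nhds x₀ :=
    hUopen.mem_nhds (by exact hx₀r)
  have hss : Function.support (fun t => q.eval t ^ 2) = {t : ℝ | q.eval t ≠ 0} := by
    ext t; simp [Function.support, pow_eq_zero_iff]
  rw [hss]
  exact hx₀ _ hU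


lemma GQ.orth_low (μ : Measure ℝ)
    (hmom : ∀ n : ℕ, Integrable (fun x : ℝ => |x| ^ n) μ)
    (p : ℕ → Polynomial ℝ)
    (hdeg : ∀ n : ℕ, (p n).degree = n)
    (horth : ∀ m n : ℕ, m ≠ n → ∫ x, (p m).eval x * (p n).eval x ∂μ = 0)
    (m : ℕ) :
    ∀ q : Polynomial ℝ, q.degree < m → ∫ t, (p m).eval t * q.eval t ∂μ = 0 := by
  have hip : ∀ a b : Polynomial ℝ, Integrable (fun t => a.eval t * b.eval t) μ := by
    intro a b
    have := GQ.integrable_poly μ hmom (a * b)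
    simpa only [eval_mul] using this
  suffices h : ∀ N : ℕ, ∀ q : Polynomial ℝ, q.natDegree < N → q.degree < m →
      ∫ t, (p m).eval t * q.eval t ∂μ = 0 by
    intro q hq
    exact h (q.natDegree + 1) q (Nat.lt_succ_self _) hq
  intro N
  induction N with
  | zero => intro q hq; exact absurd hq (Nat.not_lt_zero _)
  | succ N ih =>
    intro q hqN hqm
    by_cases hq0 : q = 0
    · simp [hq0]
    set d := q.natDegree with hd
    have hpd0 : p d ≠ 0 := by
      intro h
      have := hdeg d
      rw [h, degree_zero] at this
      exact absurd this (by simp)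
    set c := q.leadingCoeff / (p d).leadingCoeff with hc
    have hc0 : c ≠ 0 :=
      div_ne_zero (leadingCoeff_ne_zero.2 hq0) (leadingCoeff_ne_zero.2 hpd0)
    have hdm : (d : WithBot ℕ) < m := by
      rwa [degree_eq_natDegree hq0] at hqm
    have hdm' : d < m := by exact_mod_cast hdm
    set r := q - C c * p d with hr
    have hdegCc : (C c * p d).degree = q.degree := by
      rw [degree_C_mul hc0, hdeg, degree_eq_natDegree hq0]
    have hlc : (C c * p d).leadingCoeff = q.leadingCoeff := by
      rw [leadingCoeff_mul, leadingCoeff_C, hc,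
        div_mul_cancel₀ _ (leadingCoeff_ne_zero.2 hpd0)]
    have hdegr : r.degree < q.degree := by
      have := degree_sub_lt hdegCc.symm hq0 hlc.symm
      simpa [hr] using this
    have hkey : ∀ t : ℝ, (p m).eval t * q.eval t
        = c * ((p m).eval t * (p d).eval t) + (p m).eval t * r.eval t := by
      intro t
      have : q = C c * p d + r := by rw [hr]; ring
      rw [this]
      simp only [eval_add, eval_mul, eval_C]
      ring
    have hsplit : ∫ t, (p m).eval t * q.eval t ∂μ
        = c * (∫ t, (p m).eval t * (p d).eval t ∂μ) + ∫ t, (p m).eval t * r.eval t ∂μ := by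
      simp_rw [hkey]
      rw [integral_add ((hip (p m) (p d)).const_mul c) (hip (p m) r),
        MeasureTheory.integral_const_mul]
    rw [hsplit, horth m d (Nat.ne_of_gt hdm'), mul_zero, zero_add]
    by_cases hr0 : r = 0
    · simp [hr0]
    · refine ih r ?_ (lt_trans hdegr hqm)
      have : r.natDegree < q.natDegree := natDegree_lt_natDegree hr0 hdegr
      omega

lemma GQ.degree_C_mul_le (c : ℝ) (q : Polynomial ℝ) : (C c * q).degree ≤ q.degree := by
  refine (degree_mul_le _ _).trans ?_
  calc (C c).degree + q.degree ≤ 0 + q.degree := add_le_add degree_C_le le_rfl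
    _ = q.degree := zero_add _

lemma GQ.lagrange_rep (n : ℕ) (hn : 1 ≤ n) (x : Fin n → ℝ) (hx : Function.Injective x)
    (l : Fin n → Polynomial ℝ)
    (hl_deg : ∀ k : Fin n, (l k).degree < n)
    (hl_eval : ∀ k j : Fin n, (l k).eval (x j) = if k = j then 1 else 0)
    (r : Polynomial ℝ) (hr : r.degree < n) :
    r = ∑ k : Fin n, C (r.eval (x k)) * l k := by
  set g := r - ∑ k : Fin n, C (r.eval (x k)) * l k with hg
  have hgdeg : g.degree < n := by
    apply lt_of_le_of_lt (degree_sub_le _ _)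
    rw [max_lt_iff]
    refine ⟨hr, lt_of_le_of_lt (degree_sum_le _ _) ?_⟩
    refine (Finset.sup_lt_iff (WithBot.bot_lt_coe n)).mpr ?_
    intro k _
    exact lt_of_le_of_lt (GQ.degree_C_mul_le _ _) (hl_deg k)
  have hgeval : ∀ j : Fin n, g.eval (x j) = 0 := by
    intro j
    rw [hg]
    simp only [eval_sub, eval_finset_sum, eval_mul, eval_C, hl_eval]
    rw [Finset.sum_eq_single j]
    · simp
    · intro k _ hk; simp [hk]
    · simp
  have hg0 : g = 0 := by
    apply Polynomial.eq_zero_of_natDegree_lt_card_of_eval_eq_zero g hx hgeval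
    rw [Fintype.card_fin]
    by_cases h0 : g = 0
    · rw [h0, natDegree_zero]; omega
    · exact_mod_cast (degree_eq_natDegree h0) ▸ hgdeg
  exact sub_eq_zero.mp hg0


/-- **Gauss quadrature.** Let `x₁ < … < xₙ` be the zeros of the orthogonal polynomial
`pₙ`, let `lₖ` be the Lagrange interpolation polynomials (`deg lₖ < n`,
`lₖ(xⱼ) = δₖⱼ`) and put `λₖ := ∫ lₖ dμ`. Then `λₖ = ∫ lₖ² dμ > 0` and
`∫ f dμ = ∑ₖ λₖ f(xₖ)` for every polynomial `f` of degree `≤ 2n−1`. -/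
theorem gauss_quadrature
    (μ : Measure ℝ)
    (hsupp : (measureSupport μ).Infinite)
    (hmom : ∀ n : ℕ, Integrable (fun x : ℝ => |x| ^ n) μ)
    (p : ℕ → Polynomial ℝ)
    (hdeg : ∀ n : ℕ, (p n).degree = n)
    (horth : ∀ m n : ℕ, m ≠ n → ∫ x, (p m).eval x * (p n).eval x ∂μ = 0)
    (n : ℕ) (hn : 1 ≤ n)
    (x : Fin n → ℝ) (hx_mono : StrictMono x)
    (hx_root : ∀ k : Fin n, (p n).eval (x k) = 0)
    (l : Fin n → Polynomial ℝ)
    (hl_deg : ∀ k : Fin n, (l k).degree < n)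
    (hl_eval : ∀ k j : Fin n, (l k).eval (x j) = if k = j then 1 else 0) :
    (∀ k : Fin n,
      (∫ t, (l k).eval t ∂μ) = (∫ t, (l k).eval t ^ 2 ∂μ) ∧
      0 < ∫ t, (l k).eval t ∂μ) ∧
    (∀ f : Polynomial ℝ, f.degree ≤ (2 * n - 1 : ℕ) →
      ∫ t, f.eval t ∂μ = ∑ k : Fin n, (∫ t, (l k).eval t ∂μ) * f.eval (x k)) := by
  have hxinj : Function.Injective x := hx_mono.injective
  have hint : ∀ q : Polynomial ℝ, Integrable (fun t => q.eval t) μ :=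
    GQ.integrable_poly μ hmom
  have quad : ∀ f : Polynomial ℝ, f.degree ≤ (2 * n - 1 : ℕ) →
      ∫ t, f.eval t ∂μ = ∑ k : Fin n, (∫ t, (l k).eval t ∂μ) * f.eval (x k) := by
    intro f hf
    have hpn0 : p n ≠ 0 := by
      intro h
      have := hdeg n
      rw [h, degree_zero] at this
      exact absurd this (by simp)
    set P := p n * C ((p n).leadingCoeff)⁻¹ with hP
    have hPm : P.Monic := monic_mul_leadingCoeff_inv hpn0
    have hPdeg : P.degree = n := by
      rw [hP, degree_mul_leadingCoeff_inv _ hpn0, hdeg]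
    set r := f %ₘ P with hr
    set q := f /ₘ P with hq
    have hfd : f = r + P * q := (modByMonic_add_div f P).symm
    have hrdeg : r.degree < n := by
      rw [← hPdeg]; exact degree_modByMonic_lt f hPm
    have hqdeg : q.degree < (n : WithBot ℕ) := by
      rcases eq_or_ne q 0 with h | h
      · rw [h, degree_zero]; exact WithBot.bot_lt_coe n
      · rw [degree_eq_natDegree h]
        have h1 : q.natDegree = f.natDegree - P.natDegree := natDegree_divByMonic f hPm
        have h2 : f.natDegree ≤ 2 * n - 1 := natDegree_le_iff_degree_le.mpr hf
        have h3 : P.natDegree = n := natDegree_eq_of_degree_eq_some hPdeg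
        exact_mod_cast (by omega : q.natDegree < n)
    have hPq0 : ∫ t, (P * q).eval t ∂μ = 0 := by
      have heq : ∀ t : ℝ, (P * q).eval t
          = (p n).eval t * (C ((p n).leadingCoeff)⁻¹ * q).eval t := by
        intro t
        rw [hP]
        simp only [eval_mul, eval_C]
        ring
      simp_rw [heq]
      exact GQ.orth_low μ hmom p hdeg horth n _
        (lt_of_le_of_lt (GQ.degree_C_mul_le _ _) hqdeg)
    have h1 : ∫ t, f.eval t ∂μ = ∫ t, r.eval t ∂μ := by
      conv_lhs => rw [hfd]
      simp only [eval_add]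
      rw [integral_add (hint r) (hint (P * q)), hPq0, add_zero]
    have hrl : r = ∑ k : Fin n, C (r.eval (x k)) * l k :=
      GQ.lagrange_rep n hn x hxinj l hl_deg hl_eval r hrdeg
    have h2 : ∫ t, r.eval t ∂μ
        = ∑ k : Fin n, (∫ t, (l k).eval t ∂μ) * r.eval (x k) := by
      conv_lhs => rw [hrl]
      simp only [eval_finset_sum, eval_mul, eval_C]
      rw [integral_finset_sum _ (fun k _ => (hint (l k)).const_mul _)]
      refine Finset.sum_congr rfl fun k _ => ?_
      rw [MeasureTheory.integral_const_mul, mul_comm]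
    have hfr : ∀ k : Fin n, f.eval (x k) = r.eval (x k) := by
      intro k
      conv_lhs => rw [hfd]
      simp only [eval_add, eval_mul, eval_C, hP, hx_root k]
      ring
    rw [h1, h2]
    exact Finset.sum_congr rfl fun k _ => by rw [hfr k]
  refine ⟨fun k => ?_, quad⟩
  have hlk0 : l k ≠ 0 := by
    intro h
    have := hl_eval k k
    simp [h] at this
  have hdlt : (l k).natDegree < n :=
    (natDegree_lt_iff_degree_lt hlk0).mpr (by exact_mod_cast hl_deg k)
  have hsq : ((l k) ^ 2).degree ≤ ((2 * n - 1 : ℕ) : WithBot ℕ) := by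
    rw [← natDegree_le_iff_degree_le, natDegree_pow]
    omega
  have hq2 := quad ((l k) ^ 2) hsq
  simp only [eval_pow] at hq2
  have hsum : ∑ j : Fin n, (∫ t, (l j).eval t ∂μ) * ((l k).eval (x j)) ^ 2
      = ∫ t, (l k).eval t ∂μ := by
    rw [Finset.sum_eq_single k]
    · rw [hl_eval k k]; simp
    · intro j _ hj
      rw [hl_eval k j, if_neg (Ne.symm hj)]
      simp
    · simp
  have heq : (∫ t, (l k).eval t ∂μ) = ∫ t, (l k).eval t ^ 2 ∂μ := by
    rw [hq2]; exact hsum.symm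
  refine ⟨heq, ?_⟩
  rw [heq]
  exact GQ.integral_sq_pos μ hsupp hmom (l k) hlk0
end
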